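/- Fix c ≥ 2. Then there exists a unique x* > 0 such that e^{x*}·K₀(x*) = −c·log(x*), and for every x with 0 < x < x*, one has eˣ·K₀(x) < −c·log(x). -/

import Mathlib

open Real

/-- Modified Bessel function of the second kind of order zero. -/
noncomputable def besselK0 (x : ℝ) : ℝ :=
  ∫ t in Set.Ioi (0:ℝ), Real.exp (-x * Real.cosh t)

/-!
With f(x) = eˣK₀(x) + c log x, we have K₀′ = −K₁ and
K₁ − K₀ = ∫ (cosh t − 1) e^{−x cosh t} dt ≤ ∫ sinh t e^{−x cosh t} dt = e^{−x}/x,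
so f′(x) ≥ (c − 1)/x > 0 and f is strictly increasing on (0, ∞). Also f(1) = e K₀(1) > 0, while
splitting the integral at T = 2 − log x gives K₀(x) ≤ 3 − log x for x ≤ 1, whence f(e⁻⁵) < 0.
The crossing point is the zero of f given by the intermediate value theorem.
-/

open MeasureTheory Set Filter

noncomputable def besselK1 (x : ℝ) : ℝ :=
  ∫ t in Ioi (0:ℝ), cosh t * exp (-x * cosh t)

section Integrability

variable {x : ℝ}

lemma self_le_cosh (t : ℝ) : t ≤ cosh t := by
  rcases le_or_gt 0 t with ht | ht
  · exact (self_le_sinh_iff.2 ht).trans (sinh_lt_cosh t).le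
  · linarith [one_le_cosh t]

lemma integrableOn_exp_neg_mul_cosh (hx : 0 < x) :
    IntegrableOn (fun t => exp (-x * cosh t)) (Ioi 0) := by
  refine (exp_neg_integrableOn_Ioi 0 hx).mono' (by fun_prop) (ae_of_all _ fun t => ?_)
  rw [norm_of_nonneg (exp_pos _).le, exp_le_exp]
  nlinarith [self_le_cosh t]

lemma cosh_mul_exp_neg_mul_cosh_le (hx : 0 < x) (t : ℝ) :
    cosh t * exp (-x * cosh t) ≤ 2 / x * exp (-(x / 2) * cosh t) := by
  have hsplit : exp (-x * cosh t) = exp (-(x / 2 * cosh t)) * exp (-(x / 2) * cosh t) := by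
    rw [← exp_add]; ring_nf
  have hlin : x / 2 * cosh t ≤ exp (x / 2 * cosh t) := by
    linarith [add_one_le_exp (x / 2 * cosh t)]
  have hcosh : cosh t * exp (-(x / 2 * cosh t)) ≤ 2 / x := by
    rw [exp_neg, ← div_eq_mul_inv, div_le_div_iff₀ (exp_pos _) hx]
    linarith
  rw [hsplit, ← mul_assoc]
  exact mul_le_mul_of_nonneg_right hcosh (exp_pos _).le

lemma integrableOn_cosh_mul_exp_neg_mul_cosh (hx : 0 < x) :
    IntegrableOn (fun t => cosh t * exp (-x * cosh t)) (Ioi 0) := by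
  refine ((integrableOn_exp_neg_mul_cosh (half_pos hx)).const_mul (2 / x)).mono' (by fun_prop)
    (ae_of_all _ fun t => ?_)
  rw [norm_of_nonneg (by positivity)]
  exact cosh_mul_exp_neg_mul_cosh_le hx t

lemma integrableOn_sinh_mul_exp_neg_mul_cosh (hx : 0 < x) :
    IntegrableOn (fun t => sinh t * exp (-x * cosh t)) (Ioi 0) := by
  refine (integrableOn_cosh_mul_exp_neg_mul_cosh hx).mono' (by fun_prop) (ae_of_all _ fun t => ?_)
  rw [norm_mul, norm_of_nonneg (exp_pos _).le, norm_eq_abs, abs_sinh, ← cosh_abs t]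
  exact mul_le_mul_of_nonneg_right (sinh_lt_cosh _).le (exp_pos _).le

end Integrability

section Calculus

variable {x : ℝ}

lemma tendsto_exp_neg_mul_cosh_atTop (hx : 0 < x) :
    Tendsto (fun t => exp (-x * cosh t)) atTop (nhds 0) :=
  tendsto_exp_atBot.comp <|
    (tendsto_atTop_mono self_le_cosh tendsto_id).const_mul_atTop_of_neg (neg_lt_zero.2 hx)

lemma integral_Ioi_sinh_mul_exp_neg_mul_cosh (hx : 0 < x) {a : ℝ} (ha : 0 ≤ a) :
    ∫ t in Ioi a, sinh t * exp (-x * cosh t) = exp (-x * cosh a) / x := by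
  have hderiv (t : ℝ) :
      HasDerivAt (fun t => exp (-x * cosh t) / -x) (sinh t * exp (-x * cosh t)) t := by
    refine (((hasDerivAt_cosh t).const_mul (-x)).exp.div_const (-x)).congr_deriv ?_
    field_simp [hx.ne']
  rw [integral_Ioi_of_hasDerivAt_of_tendsto' (fun t _ => hderiv t)
    ((integrableOn_sinh_mul_exp_neg_mul_cosh hx).mono_set (Ioi_subset_Ioi ha))
    (by simpa using (tendsto_exp_neg_mul_cosh_atTop hx).div_const (-x))]
  ring

lemma hasDerivAt_besselK0 (hx : 0 < x) : HasDerivAt besselK0 (-besselK1 x) x := by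
  have hbound : ∀ᵐ t ∂volume.restrict (Ioi 0), ∀ y ∈ Metric.ball x (x / 2),
      ‖-(cosh t * exp (-y * cosh t))‖ ≤ cosh t * exp (-(x / 2) * cosh t) := by
    refine ae_of_all _ fun t y hy => ?_
    have hxy : x / 2 ≤ y := by
      linarith [(abs_lt.1 (Real.dist_eq y x ▸ Metric.mem_ball.1 hy)).1]
    rw [norm_neg, norm_of_nonneg (by positivity)]
    gcongr
  have hderiv : ∀ᵐ t ∂volume.restrict (Ioi 0), ∀ y ∈ Metric.ball x (x / 2),
      HasDerivAt (fun y => exp (-y * cosh t)) (-(cosh t * exp (-y * cosh t))) y :=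
    ae_of_all _ fun t y _ => by
      simpa [mul_comm] using ((hasDerivAt_id y).neg.mul_const (cosh t)).exp
  have := (hasDerivAt_integral_of_dominated_loc_of_deriv_le (μ := volume.restrict (Ioi 0))
    (F := fun y t => exp (-y * cosh t)) (Metric.ball_mem_nhds x (half_pos hx))
    (Eventually.of_forall fun y => by fun_prop) (integrableOn_exp_neg_mul_cosh hx) (by fun_prop)
    hbound (integrableOn_cosh_mul_exp_neg_mul_cosh (half_pos hx)) hderiv).2
  rwa [integral_neg] at this

lemma besselK1_sub_besselK0_le (hx : 0 < x) : besselK1 x - besselK0 x ≤ exp (-x) / x := by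
  have hint := (integrableOn_cosh_mul_exp_neg_mul_cosh hx).sub (integrableOn_exp_neg_mul_cosh hx)
  calc besselK1 x - besselK0 x
      = ∫ t in Ioi 0, cosh t * exp (-x * cosh t) - exp (-x * cosh t) :=
        (integral_sub (integrableOn_cosh_mul_exp_neg_mul_cosh hx)
          (integrableOn_exp_neg_mul_cosh hx)).symm
    _ ≤ ∫ t in Ioi 0, sinh t * exp (-x * cosh t) := by
        refine setIntegral_mono_on hint (integrableOn_sinh_mul_exp_neg_mul_cosh hx)
          measurableSet_Ioi fun t ht => ?_
        have hcosh : cosh t - 1 ≤ sinh t := by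
          linarith [cosh_sub_sinh t, exp_le_one_iff.2 (neg_nonpos.2 (le_of_lt ht))]
        rw [← sub_one_mul]
        exact mul_le_mul_of_nonneg_right hcosh (exp_pos _).le
    _ = exp (-x) / x := by
        rw [integral_Ioi_sinh_mul_exp_neg_mul_cosh hx le_rfl, cosh_zero, mul_one]

end Calculus

lemma besselK0_pos {x : ℝ} (hx : 0 < x) : 0 < besselK0 x := by
  rw [besselK0, setIntegral_pos_iff_support_of_nonneg_ae (ae_of_all _ fun t => (exp_pos _).le)
    (integrableOn_exp_neg_mul_cosh hx)]
  simp [Function.support, (exp_pos _).ne']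

lemma hasDerivAt_exp_mul_besselK0_add_mul_log (c : ℝ) {x : ℝ} (hx : 0 < x) :
    HasDerivAt (fun x => exp x * besselK0 x + c * log x)
      (exp x * (besselK0 x - besselK1 x) + c / x) x :=
  (((hasDerivAt_exp x).mul (hasDerivAt_besselK0 hx)).add
    ((hasDerivAt_log hx.ne').const_mul c)).congr_deriv (by ring)

lemma strictMonoOn_exp_mul_besselK0_add_mul_log {c : ℝ} (hc : 1 < c) :
    StrictMonoOn (fun x => exp x * besselK0 x + c * log x) (Ioi 0) := by
  refine strictMonoOn_of_deriv_pos (convex_Ioi 0)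
    (fun x hx => (hasDerivAt_exp_mul_besselK0_add_mul_log c hx).continuousAt.continuousWithinAt)
    fun x hx => ?_
  rw [interior_Ioi] at hx
  rw [(hasDerivAt_exp_mul_besselK0_add_mul_log c hx).deriv]
  have hK : -(1 / x) ≤ exp x * (besselK0 x - besselK1 x) := by
    have := mul_le_mul_of_nonneg_left (besselK1_sub_besselK0_le hx) (exp_pos x).le
    rw [mul_div_assoc', ← exp_add, add_neg_cancel, exp_zero] at this
    linarith [mul_sub (exp x) (besselK0 x) (besselK1 x)]
  have : 1 / x < c / x := div_lt_div_of_pos_right hc hx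
  linarith

section UpperBound

variable {x : ℝ}

lemma intervalIntegral_exp_neg_mul_cosh_le (hx : 0 ≤ x) {T : ℝ} (hT : 0 ≤ T) :
    ∫ t in (0)..T, exp (-x * cosh t) ≤ T := by
  calc ∫ t in (0)..T, exp (-x * cosh t)
      ≤ ∫ _ in (0)..T, (1 : ℝ) :=
        intervalIntegral.integral_mono_on hT
          ((by fun_prop : Continuous fun t => exp (-x * cosh t)).intervalIntegrable 0 T)
          intervalIntegrable_const fun t _ => exp_le_one_iff.2 (by nlinarith [cosh_pos t])
    _ = T := by simp

lemma setIntegral_Ioi_exp_neg_mul_cosh_le (hx : 0 < x) {T : ℝ} (hT : 0 < T) :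
    ∫ t in Ioi T, exp (-x * cosh t) ≤ 1 / (x * sinh T) := by
  have hsinhT : 0 < sinh T := sinh_pos_iff.2 hT
  have hsinh := (integrableOn_sinh_mul_exp_neg_mul_cosh hx).mono_set (Ioi_subset_Ioi hT.le)
  -- `sinh t / sinh T ≥ 1` on the tail, and the weighted integrand has an explicit primitive.
  calc ∫ t in Ioi T, exp (-x * cosh t)
      ≤ ∫ t in Ioi T, (sinh T)⁻¹ * (sinh t * exp (-x * cosh t)) := by
        refine setIntegral_mono_on ((integrableOn_exp_neg_mul_cosh hx).mono_set
          (Ioi_subset_Ioi hT.le)) (hsinh.const_mul _) measurableSet_Ioi fun t ht => ?_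
        rw [← mul_assoc]
        exact le_mul_of_one_le_left (exp_pos _).le
          ((one_le_inv_mul₀ hsinhT).2 (sinh_le_sinh.2 (le_of_lt ht)))
    _ = exp (-x * cosh T) / (x * sinh T) := by
        rw [integral_const_mul, integral_Ioi_sinh_mul_exp_neg_mul_cosh hx hT.le]
        field_simp
    _ ≤ 1 / (x * sinh T) := by
        gcongr
        exact exp_le_one_iff.2 (by nlinarith [cosh_pos T])

lemma besselK0_le_add_one_div_mul_sinh (hx : 0 < x) {T : ℝ} (hT : 0 < T) :
    besselK0 x ≤ T + 1 / (x * sinh T) := by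
  rw [besselK0, ← intervalIntegral.integral_interval_add_Ioi (integrableOn_exp_neg_mul_cosh hx)
    ((integrableOn_exp_neg_mul_cosh hx).mono_set (Ioi_subset_Ioi hT.le))]
  exact add_le_add (intervalIntegral_exp_neg_mul_cosh_le hx.le hT.le)
    (setIntegral_Ioi_exp_neg_mul_cosh_le hx hT)

lemma besselK0_le_three_sub_log (hx : 0 < x) (hx1 : x ≤ 1) : besselK0 x ≤ 3 - log x := by
  have hT : 0 < 2 - log x := by linarith [log_nonpos hx.le hx1]
  have hsinh : 1 ≤ x * sinh (2 - log x) := by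
    rw [sinh_eq, exp_sub, neg_sub, exp_sub, exp_log hx]
    have he : 3 ≤ exp 2 := by linarith [add_one_le_exp 2]
    field_simp
    nlinarith
  calc besselK0 x ≤ 2 - log x + 1 / (x * sinh (2 - log x)) :=
        besselK0_le_add_one_div_mul_sinh hx hT
    _ ≤ 2 - log x + 1 := by gcongr; exact div_le_one_of_le₀ hsinh (by positivity)
    _ = 3 - log x := by ring

end UpperBound

lemma exists_exp_mul_besselK0_add_mul_log_neg {c : ℝ} (hc : 2 ≤ c) :
    ∃ a ∈ Ioc 0 1, exp a * besselK0 a + c * log a < 0 := by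
  have ha : exp (-5) ≤ 1 / 6 := by
    rw [exp_neg, ← one_div]
    exact one_div_le_one_div_of_le (by norm_num) (by linarith [add_one_le_exp 5])
  set a := exp (-5)
  have hexp : exp a ≤ 6 / 5 := by
    calc exp a ≤ 1 / (1 - a) := exp_bound_div_one_sub_of_interval (exp_pos _).le (by linarith)
      _ ≤ 6 / 5 := by rw [div_le_div_iff₀ (by linarith) (by norm_num)]; linarith
  have hK : besselK0 a ≤ 8 := by
    have := besselK0_le_three_sub_log (exp_pos (-5)) (by linarith)
    rwa [log_exp, sub_neg_eq_add, show (3 : ℝ) + 5 = 8 by norm_num] at this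
  refine ⟨a, ⟨exp_pos _, by linarith⟩, ?_⟩
  rw [log_exp]
  nlinarith [exp_pos a]

theorem besselK0_log_crossing (c : ℝ) (hc : 2 ≤ c) :
    ∃ xstar : ℝ, 0 < xstar ∧
      Real.exp xstar * besselK0 xstar = -c * Real.log xstar ∧
      (∀ y : ℝ, 0 < y → Real.exp y * besselK0 y = -c * Real.log y → y = xstar) ∧
      ∀ x : ℝ, 0 < x → x < xstar → Real.exp x * besselK0 x < -c * Real.log x := by
  set f : ℝ → ℝ := fun x => exp x * besselK0 x + c * log x
  have hcross (y : ℝ) : f y = 0 ↔ exp y * besselK0 y = -c * log y := by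
    simp only [f]
    constructor <;> intro h <;> linarith
  have hmono : StrictMonoOn f (Ioi 0) := strictMonoOn_exp_mul_besselK0_add_mul_log (by linarith)
  obtain ⟨a, ⟨ha0, ha1⟩, hfa⟩ := exists_exp_mul_besselK0_add_mul_log_neg hc
  have hf1 : 0 < f 1 := by simpa [f] using mul_pos (exp_pos 1) (besselK0_pos one_pos)
  obtain ⟨xstar, hxstar, hfx⟩ := intermediate_value_Icc ha1 (fun y hy =>
    (hasDerivAt_exp_mul_besselK0_add_mul_log c (ha0.trans_le hy.1)).continuousAt.continuousWithinAt)
    (show (0 : ℝ) ∈ Icc (f a) (f 1) from ⟨hfa.le, hf1.le⟩)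
  have hx0 : 0 < xstar := ha0.trans_le hxstar.1
  refine ⟨xstar, hx0, (hcross xstar).1 hfx,
    fun y hy hfy => hmono.injOn hy hx0 (((hcross y).2 hfy).trans hfx.symm), fun x hx hlt => ?_⟩
  have hfx' : f x < 0 := hfx ▸ hmono hx hx0 hlt
  simp only [f] at hfx'
  linarith
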